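/- Let X be a linear order of the form ω + Y and n ∈ ℕ. If f : ℕ → ω^X_n is strictly decreasing (f(i+1) ≺ f(i) for all i), then the map f_n : [ℕ]^{n+1} → ℕ^n × X is bad, i.e., there are no s ⊲ t in [ℕ]^{n+1} with f_n(s) ≤ f_n(t) in the componentwise order. -/

import Mathlib

universe u v

/-! ### First-difference index and the lexicographic relation `≺` -/

/-- `jIdx α β` is the least `j < min (l α) (l β)` with `α_j ≠ β_j`,
or `min (l α) (l β)` if no such index exists. -/
noncomputable def jIdx {X : Type u} (α β : List X) : ℕ := by
  classical
  exact if h : ∃ j, j < min α.length β.length ∧ α[j]? ≠ β[j]? then Nat.find h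
    else min α.length β.length

/-- The relation `≺` on finite sequences over `(X, lt)`. -/
noncomputable def SeqLT {X : Type u} (lt : X → X → Prop) (α β : List X) : Prop :=
  (∃ h : jIdx α β < min α.length β.length,
      lt (α[jIdx α β]'(lt_of_lt_of_le h (min_le_left _ _)))
         (β[jIdx α β]'(lt_of_lt_of_le h (min_le_right _ _)))) ∨
  (jIdx α β = α.length ∧ α.length < β.length)

/-! ### Orders of the form `ω + Y` -/

/-- The least element `0 = (0,0)` of `ℕ ⊕ₗ Y`. -/
def omegaZero (Y : Type u) [LinearOrder Y] : ℕ ⊕ₗ Y := toLex (Sum.inl 0)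

/-- The map `x ↦ 1 + x` on `ℕ ⊕ₗ Y`. -/
def omegaOnePlus (Y : Type u) [LinearOrder Y] : ℕ ⊕ₗ Y → ℕ ⊕ₗ Y := fun x =>
  match ofLex x with
  | Sum.inl n => toLex (Sum.inl (n + 1))
  | Sum.inr y => toLex (Sum.inr y)

/-- The extended sequence `ᾱ : ℕ → T`: `ᾱ_j = 1 + α_j` for `j < l α` and `ᾱ_j = 0` otherwise,
relative to a given least element `zero` and map `onePlus`. -/
def extW {T : Type u} (zero : T) (onePlus : T → T) (α : List T) (j : ℕ) : T :=
  if h : j < α.length then onePlus (α[j]'h) else zero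

/-- `c(α, β) := ᾱ_{j(α,β)}`. -/
noncomputable def cW {T : Type u} (zero : T) (onePlus : T → T) (α β : List T) : T :=
  extW zero onePlus α (jIdx α β)

/-! ### The iterated construction `ω^X_n` -/

/-- A carrier together with relations `<` and `≤` (a raw order package). -/
structure OrdPack : Type (u + 1) where
  T : Type u
  lt : T → T → Prop
  le : T → T → Prop

/-- The package for `ω(X)`: weakly decreasing finite sequences with `≺` and `⪯`. -/
noncomputable def stepPack (P : OrdPack.{u}) : OrdPack.{u} where
  T := {α : List P.T // List.Chain' (fun a b => P.le b a) α}
  lt a b := SeqLT P.lt a.1 b.1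
  le a b := SeqLT P.lt a.1 b.1 ∨ a = b

/-- The package of a linear order. -/
def linPack (Z : Type u) [LinearOrder Z] : OrdPack.{u} := ⟨Z, (· < ·), (· ≤ ·)⟩

/-- The package of `X = ω + Y`. -/
def basePack (Y : Type u) [LinearOrder Y] : OrdPack.{u} := linPack (ℕ ⊕ₗ Y)

/-- `iterPack P n` is (the package of) `ω^X_n` for `X` the order packaged by `P`. -/
noncomputable def iterPack (P : OrdPack.{u}) : ℕ → OrdPack.{u}
  | 0 => P
  | n + 1 => stepPack (iterPack P n)

theorem leReflIter (Y : Type u) [LinearOrder Y] :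
    ∀ (m : ℕ) (x : (iterPack (basePack Y) m).T), (iterPack (basePack Y) m).le x x
  | 0, x => le_refl (α := ℕ ⊕ₗ Y) x
  | _ + 1, _ => Or.inr rfl

theorem chain'_cons_all_eq {T : Type u} {R : T → T → Prop} {z : T} (hz : R z z) :
    ∀ l : List T, (∀ x ∈ l, x = z) → List.Chain' R (z :: l) := by
  intro l
  induction l with
  | nil => intro _; exact List.isChain_singleton z
  | cons a l ih =>
    intro h
    have ha : a = z := h a List.mem_cons_self
    subst ha
    exact List.isChain_cons_cons.mpr ⟨hz, ih fun x hx => h x (List.mem_cons_of_mem _ hx)⟩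

/-- The least element `0` of `ω^X_m` (for `X = ω + Y`). -/
noncomputable def zeroIter (Y : Type u) [LinearOrder Y] :
    (m : ℕ) → (iterPack (basePack Y) m).T
  | 0 => omegaZero Y
  | _ + 1 => ⟨[], List.isChain_nil⟩

/-- The map `x ↦ 1 + x` on `ω^X_m` (for `X = ω + Y`): at successor levels it maps a
constant-zero sequence to the constant-zero sequence that is longer by one, and is the
identity everywhere else. -/
noncomputable def onePlusIter (Y : Type u) [LinearOrder Y] :
    (m : ℕ) → (iterPack (basePack Y) m).T → (iterPack (basePack Y) m).T
  | 0, x => omegaOnePlus Y x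
  | m + 1, a => by
    classical
    exact if h : ∀ x ∈ a.1, x = zeroIter Y m then
      ⟨zeroIter Y m :: a.1,
        chain'_cons_all_eq (R := fun p q => (iterPack (basePack Y) m).le q p)
          (leReflIter Y m (zeroIter Y m)) a.1 h⟩
    else a

/-- `c(α, β) ∈ ω^X_m` for `α, β ∈ ω^X_{m+1}` (given via their underlying lists). -/
noncomputable def cIter (Y : Type u) [LinearOrder Y] (m : ℕ)
    (α β : List (iterPack (basePack Y) m).T) : (iterPack (basePack Y) m).T :=
  cW (zeroIter Y m) (onePlusIter Y m) α β

/-- Transport along an equality of levels. -/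
noncomputable def castT {Y : Type u} [LinearOrder Y] {a b : ℕ} (h : a = b)
    (x : (iterPack (basePack Y) a).T) : (iterPack (basePack Y) b).T :=
  cast (congrArg (fun m => (iterPack (basePack Y) m).T) h) x

/-! ### Barriers `[ℕ]^n`, the relation `⊲`, and `∪` -/

/-- `s ⊲ t` : `s_0 < t_0` and `s_{i+1} = t_i` for all `i < n`. -/
def Tril {n : ℕ} (s t : Fin (n + 1) → ℕ) : Prop :=
  s 0 < t 0 ∧ ∀ i : Fin n, s i.succ = t i.castSucc

/-- `s ∪ t` for `s ⊲ t` : `(s ∪ t)_i = s_i` for `i ≤ n` and `(s ∪ t)_{n+1} = t_n`. -/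
def unionSeq {n : ℕ} (s t : Fin (n + 1) → ℕ) : Fin (n + 2) → ℕ := fun i =>
  if h : (i : ℕ) < n + 1 then s ⟨i, h⟩ else t (Fin.last n)

/-- Componentwise order on `ℕ^k × T`. -/
def prodLE {k : ℕ} {T : Type u} (le : T → T → Prop) (a b : (Fin k → ℕ) × T) : Prop :=
  (∀ i, a.1 i ≤ b.1 i) ∧ le a.2 b.2

/-- A map `g : [ℕ]^{m+1} → Q` is good if there are `s ⊲ t` with `g s ≤ g t`. -/
def GoodSub {m : ℕ} {Q : Type v} (le : Q → Q → Prop)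
    (g : {s : Fin (m + 1) → ℕ // StrictMono s} → Q) : Prop :=
  ∃ s t : {s : Fin (m + 1) → ℕ // StrictMono s}, Tril s.1 t.1 ∧ le (g s) (g t)

/-! ### The maps `f_k` -/

/-- The maps `f_k : [ℕ]^{k+1} → ℕ^k × ω^X_{n-k}` of Definition 2.4 (extended to all of
`ℕ^{k+1}`; only values on strictly increasing arguments matter). -/
noncomputable def fk {Y : Type u} [LinearOrder Y] (n : ℕ)
    (f : ℕ → (iterPack (basePack Y) n).T) :
    (k : ℕ) → (Fin (k + 1) → ℕ) → (Fin k → ℕ) × (iterPack (basePack Y) (n - k)).T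
  | 0, s => (fun i => i.elim0, f (s 0))
  | k + 1, u =>
    let a := fk n f k (u ∘ Fin.castSucc)
    let b := fk n f k (u ∘ Fin.succ)
    if h : k < n then
      let a2 := castT (show n - k = (n - (k + 1)) + 1 by omega) a.2
      let b2 := castT (show n - k = (n - (k + 1)) + 1 by omega) b.2
      (Fin.snoc a.1 (jIdx a2.1 b2.1), cIter Y (n - (k + 1)) a2.1 b2.1)
    else (Fin.snoc a.1 0, castT (show n - k = n - (k + 1) by omega) a.2)

/-- Linearity of a package (so that its carrier is a linear order). -/
def PackIsLinear (P : OrdPack.{u}) : Prop :=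
  (∀ a, P.le a a) ∧
  (∀ a b c, P.le a b → P.le b c → P.le a c) ∧
  (∀ a b, P.le a b → P.le b a → a = b) ∧
  (∀ a b, P.le a b ∨ P.le b a) ∧
  (∀ a b, P.lt a b ↔ P.le a b ∧ ¬ P.le b a)

/-- The Higman (sublist) order on finite lists over `(Q, le)`. -/
def HigmanLE {Q : Type v} (le : Q → Q → Prop) (σ τ : List Q) : Prop :=
  ∃ f : Fin σ.length → Fin τ.length, StrictMono f ∧ ∀ i, le (σ.get i) (τ.get (f i))

/-! ### Auxiliary lemmas: `jIdx` -/

section JIdx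

variable {X : Type u} {α β : List X}

theorem jIdx_le (α β : List X) : jIdx α β ≤ min α.length β.length := by
  classical
  unfold jIdx
  split
  · next h => exact (Nat.find_spec h).1.le
  · exact le_rfl

theorem jIdx_eq_of {j : ℕ}
    (h1 : j ≤ min α.length β.length)
    (h2 : ∀ i < j, α[i]? = β[i]?)
    (h3 : j < min α.length β.length → α[j]? ≠ β[j]?) :
    jIdx α β = j := by
  classical
  unfold jIdx
  split
  · next h =>
    have hspec := Nat.find_spec h
    have hge : j ≤ Nat.find h := by
      by_contra hc
      push_neg at hc
      exact hspec.2 (h2 _ hc)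
    rcases lt_or_eq_of_le h1 with h4 | h4
    · exact le_antisymm (Nat.find_le ⟨h4, h3 h4⟩) hge
    · have := hspec.1
      omega
  · next h =>
    push_neg at h
    rcases lt_or_eq_of_le h1 with h4 | h4
    · exact absurd (h _ h4) (h3 h4)
    · omega

theorem jIdx_prefix {i : ℕ} (h : i < jIdx α β) : α[i]? = β[i]? := by
  classical
  by_cases hE : ∃ j, j < min α.length β.length ∧ α[j]? ≠ β[j]?
  · have hd : jIdx α β = Nat.find hE := by unfold jIdx; rw [dif_pos hE]
    rw [hd] at h
    have := Nat.find_min hE h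
    push_neg at this
    apply this
    have h2 := (Nat.find_spec hE).1
    omega
  · have hd : jIdx α β = min α.length β.length := by unfold jIdx; rw [dif_neg hE]
    rw [hd] at h
    push_neg at hE
    exact hE _ h

theorem jIdx_ne (h : jIdx α β < min α.length β.length) :
    α[jIdx α β]? ≠ β[jIdx α β]? := by
  classical
  by_cases hE : ∃ j, j < min α.length β.length ∧ α[j]? ≠ β[j]?
  · have hd : jIdx α β = Nat.find hE := by unfold jIdx; rw [dif_pos hE]
    rw [hd]
    exact (Nat.find_spec hE).2
  · have hd : jIdx α β = min α.length β.length := by unfold jIdx; rw [dif_neg hE]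
    rw [hd] at h
    omega

theorem jIdx_comm (α β : List X) : jIdx α β = jIdx β α := by
  refine (jIdx_eq_of ?_ ?_ ?_).symm
  · rw [min_comm]; exact jIdx_le α β
  · exact fun i hi => (jIdx_prefix hi).symm
  · intro h hne
    rw [min_comm] at h
    exact jIdx_ne h hne.symm

end JIdx

/-! ### Auxiliary lemmas: `SeqLT` -/

section SeqLTLemmas

variable {X : Type u} {lt : X → X → Prop} {α β γ : List X}

theorem SeqLT.of_get {j : ℕ}
    (hα : j < α.length) (hβ : j < β.length)
    (hpre : ∀ i < j, α[i]? = β[i]?)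
    (hne : α[j]'hα ≠ β[j]'hβ)
    (hlt : lt (α[j]'hα) (β[j]'hβ)) : SeqLT lt α β := by
  have hj : jIdx α β = j := by
    refine jIdx_eq_of (by omega) hpre (fun _ => ?_)
    rw [List.getElem?_eq_getElem hα, List.getElem?_eq_getElem hβ]
    simp [hne]
  refine Or.inl ⟨by rw [hj]; omega, ?_⟩
  simp only [hj]
  exact hlt

theorem SeqLT.of_prefix (hlen : α.length < β.length)
    (hpre : ∀ i < α.length, α[i]? = β[i]?) : SeqLT lt α β :=
  Or.inr ⟨jIdx_eq_of (by omega) hpre (fun h => absurd h (by omega)), hlen⟩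

theorem SeqLT.elim' (h : SeqLT lt α β) :
    (∃ (j : ℕ) (hα : j < α.length) (hβ : j < β.length), jIdx α β = j ∧
      (∀ i < j, α[i]? = β[i]?) ∧ lt (α[j]'hα) (β[j]'hβ)) ∨
    (jIdx α β = α.length ∧ α.length < β.length ∧ ∀ i < α.length, α[i]? = β[i]?) := by
  rcases h with ⟨hlt, h2⟩ | ⟨h1, h2⟩
  · exact Or.inl ⟨jIdx α β, lt_of_lt_of_le hlt (min_le_left _ _),
      lt_of_lt_of_le hlt (min_le_right _ _), rfl, fun i hi => jIdx_prefix hi, h2⟩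
  · exact Or.inr ⟨h1, h2, fun i hi => jIdx_prefix (by omega)⟩

theorem seqLT_irrefl (hirr : ∀ a, ¬ lt a a) (α : List X) : ¬ SeqLT lt α α := by
  intro h
  rcases h.elim' with ⟨j, hα, _, _, _, hlt⟩ | ⟨_, h2, _⟩
  · exact hirr _ hlt
  · omega

theorem getElem?_eq_some_iff' {l : List X} {i : ℕ} {hi : i < l.length} {x : X} :
    l[i]? = some x ↔ l[i]'hi = x := by
  rw [List.getElem?_eq_getElem hi]
  simp

theorem seqLT_trans (htr : ∀ a b c, lt a b → lt b c → lt a c)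
    (hne' : ∀ a b, lt a b → a ≠ b)
    (h1 : SeqLT lt α β) (h2 : SeqLT lt β γ) : SeqLT lt α γ := by
  rcases h1.elim' with ⟨j1, hj1α, hj1β, _, pre1, lt1⟩ | ⟨_, hlen1, pre1⟩ <;>
    rcases h2.elim' with ⟨j2, hj2β, hj2γ, _, pre2, lt2⟩ | ⟨_, hlen2, pre2⟩
  · -- both first kind
    rcases lt_trichotomy j1 j2 with hc | hc | hc
    · have hβγ : β[j1]'hj1β = γ[j1]'(by omega) := by
        have := pre2 j1 hc
        rw [List.getElem?_eq_getElem hj1β, List.getElem?_eq_getElem (show j1 < γ.length by omega)] at this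
        exact Option.some_injective _ this
      refine SeqLT.of_get hj1α (by omega) (fun i hi => (pre1 i hi).trans (pre2 i (by omega))) ?_ ?_
      · rw [← hβγ]; exact hne' _ _ lt1
      · rw [← hβγ]; exact lt1
    · subst hc
      have hlt := htr _ _ _ lt1 lt2
      exact SeqLT.of_get hj1α hj2γ
        (fun i hi => (pre1 i hi).trans (pre2 i hi)) (hne' _ _ hlt) hlt
    · have hαβ : α[j2]'(by omega) = β[j2]'hj2β := by
        have := pre1 j2 hc
        rw [List.getElem?_eq_getElem (show j2 < α.length by omega), List.getElem?_eq_getElem hj2β] at this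
        exact Option.some_injective _ this
      refine SeqLT.of_get (by omega) hj2γ (fun i hi => (pre1 i (by omega)).trans (pre2 i hi)) ?_ ?_
      · rw [hαβ]; exact hne' _ _ lt2
      · rw [hαβ]; exact lt2
  · -- first, second
    have hβγ : β[j1]'hj1β = γ[j1]'(by omega) := by
      have := pre2 j1 hj1β
      rw [List.getElem?_eq_getElem hj1β, List.getElem?_eq_getElem (show j1 < γ.length by omega)] at this
      exact Option.some_injective _ this
    refine SeqLT.of_get hj1α (by omega) (fun i hi => (pre1 i hi).trans (pre2 i (by omega))) ?_ ?_
    · rw [← hβγ]; exact hne' _ _ lt1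
    · rw [← hβγ]; exact lt1
  · -- second, first
    by_cases hc : j2 < α.length
    · have hαβ : α[j2]'hc = β[j2]'hj2β := by
        have := pre1 j2 hc
        rw [List.getElem?_eq_getElem hc, List.getElem?_eq_getElem hj2β] at this
        exact Option.some_injective _ this
      refine SeqLT.of_get hc hj2γ (fun i hi => (pre1 i (by omega)).trans (pre2 i hi)) ?_ ?_
      · rw [hαβ]; exact hne' _ _ lt2
      · rw [hαβ]; exact lt2
    · refine SeqLT.of_prefix (by omega) (fun i hi => (pre1 i hi).trans (pre2 i (by omega)))
  · -- both second
    exact SeqLT.of_prefix (by omega) (fun i hi => (pre1 i hi).trans (pre2 i (by omega)))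

theorem seqLT_total (htot : ∀ a b : X, a ≠ b → lt a b ∨ lt b a)
    (hne : α ≠ β) : SeqLT lt α β ∨ SeqLT lt β α := by
  by_cases h : jIdx α β < min α.length β.length
  · have hd := jIdx_ne h
    set j := jIdx α β with hjd
    have hα : j < α.length := by omega
    have hβ : j < β.length := by omega
    have hvne : α[j]'hα ≠ β[j]'hβ := by
      intro he
      apply hd
      rw [List.getElem?_eq_getElem hα, List.getElem?_eq_getElem hβ, he]
    rcases htot _ _ hvne with hl | hl
    · exact Or.inl (SeqLT.of_get hα hβ (fun i hi => jIdx_prefix hi) hvne hl)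
    · exact Or.inr (SeqLT.of_get hβ hα (fun i hi => (jIdx_prefix (α := α) (β := β) hi).symm)
        (Ne.symm hvne) hl)
  · have hpre : ∀ i < min α.length β.length, α[i]? = β[i]? := by
      intro i hi
      refine jIdx_prefix ?_
      have := jIdx_le α β
      omega
    rcases lt_trichotomy α.length β.length with hc | hc | hc
    · exact Or.inl (SeqLT.of_prefix hc (fun i hi => hpre i (by omega)))
    · exfalso
      apply hne
      refine List.ext_getElem? (fun i => ?_)
      by_cases hi : i < α.length
      · exact hpre i (by omega)
      · rw [List.getElem?_eq_none (by omega), List.getElem?_eq_none (by omega)]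
    · exact Or.inr (SeqLT.of_prefix hc (fun i hi => (hpre i (by omega)).symm))

end SeqLTLemmas

/-! ### Linearity facts for packages -/

section Pack

variable {P : OrdPack.{u}}

theorem pack_lt_trans (hP : PackIsLinear P) :
    ∀ a b c, P.lt a b → P.lt b c → P.lt a c := by
  obtain ⟨hr, ht, ha, hto, hiff⟩ := hP
  intro a b c h1 h2
  rw [hiff] at h1 h2 ⊢
  exact ⟨ht _ _ _ h1.1 h2.1, fun h => h1.2 (ht _ _ _ h2.1 h)⟩

theorem pack_le_lt_trans (hP : PackIsLinear P) :
    ∀ a b c, P.le a b → P.lt b c → P.lt a c := by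
  obtain ⟨hr, ht, ha, hto, hiff⟩ := hP
  intro a b c h1 h2
  rw [hiff] at h2 ⊢
  exact ⟨ht _ _ _ h1 h2.1, fun h => h2.2 (ht _ _ _ h h1)⟩

theorem pack_lt_ne (hP : PackIsLinear P) : ∀ a b, P.lt a b → a ≠ b := by
  intro a b h he
  subst he
  rw [hP.2.2.2.2] at h
  exact h.2 h.1

theorem pack_lt_total (hP : PackIsLinear P) : ∀ a b, a ≠ b → P.lt a b ∨ P.lt b a := by
  obtain ⟨hr, ht, ha, hto, hiff⟩ := hP
  intro a b hne
  rcases hto a b with h | h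
  · exact Or.inl ((hiff a b).mpr ⟨h, fun h' => hne (ha _ _ h h')⟩)
  · exact Or.inr ((hiff b a).mpr ⟨h, fun h' => (hne (ha _ _ h' h))⟩)

theorem pack_lt_irrefl (hP : PackIsLinear P) : ∀ a, ¬ P.lt a a := by
  intro a h
  exact pack_lt_ne hP a a h rfl

theorem stepLinear (hP : PackIsLinear P) : PackIsLinear (stepPack P) := by
  have htr := pack_lt_trans hP
  have hne' := pack_lt_ne hP
  have htot := pack_lt_total hP
  have hirr := pack_lt_irrefl hP
  have hasym : ∀ a b : (stepPack P).T, (stepPack P).lt a b → ¬ (stepPack P).lt b a := by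
    intro a b h1 h2
    exact seqLT_irrefl hirr a.1 (seqLT_trans htr hne' h1 h2)
  refine ⟨fun a => Or.inr rfl, ?_, ?_, ?_, ?_⟩
  · rintro a b c (h1 | rfl) (h2 | rfl)
    · exact Or.inl (seqLT_trans htr hne' h1 h2)
    · exact Or.inl h1
    · exact Or.inl h2
    · exact Or.inr rfl
  · rintro a b (h1 | he1) (h2 | he2)
    · exact absurd h2 (hasym _ _ h1)
    · exact he2.symm
    · exact he1
    · exact he1
  · intro a b
    by_cases he : a = b
    · exact Or.inl (Or.inr he)
    · have : a.1 ≠ b.1 := fun h => he (Subtype.ext h)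
      rcases seqLT_total htot this with h | h
      · exact Or.inl (Or.inl h)
      · exact Or.inr (Or.inl h)
  · intro a b
    constructor
    · intro h
      exact ⟨Or.inl h, fun hc => by
        rcases hc with hc | hc
        · exact hasym _ _ h hc
        · subst hc; exact seqLT_irrefl hirr _ h⟩
    · rintro ⟨h1 | rfl, h2⟩
      · exact h1
      · exact absurd (Or.inr rfl) h2

end Pack

/-! ### Weakly decreasing lists -/

theorem chain'_le_get {T : Type u} {le : T → T → Prop}
    (href : ∀ a, le a a) (htr : ∀ a b c, le a b → le b c → le a c)
    {l : List T} (hl : List.Chain' (fun a b => le b a) l) :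
    ∀ i j (hij : i ≤ j), ∀ hj : j < l.length, le (l[j]'hj) (l[i]'(by omega)) := by
  have key : ∀ d i, ∀ hj : i + d < l.length, le (l[i + d]'hj) (l[i]'(by omega)) := by
    intro d
    induction d with
    | zero => intro i hj; exact href _
    | succ d ih =>
      intro i hj
      have hadj : le (l[i + d + 1]'hj) (l[i + d]'(by omega)) := by
        rw [List.Chain', List.isChain_iff_getElem] at hl
        exact hl (i + d) (by omega)
      exact htr _ _ _ hadj (ih i (by omega))
  intro i j hij hj
  obtain ⟨d, rfl⟩ : ∃ d, j = i + d := ⟨j - i, by omega⟩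
  exact key d i hj

/-! ### Facts about `zeroIter` and `onePlusIter` at every level -/

section Levels

variable {Y : Type u} [LinearOrder Y]

theorem onePlusIter_ne_nil (m : ℕ) (a : (iterPack (basePack Y) (m+1)).T) :
    (onePlusIter Y (m+1) a).1 ≠ [] := by
  classical
  by_cases h : ∀ x ∈ a.1, x = zeroIter Y m
  · intro hnil
    have e : (onePlusIter Y (m+1) a).1 = zeroIter Y m :: a.1 := congrArg Subtype.val (dif_pos h)
    rw [e] at hnil
    exact List.cons_ne_nil _ _ hnil
  · have e : onePlusIter Y (m+1) a = a := dif_neg h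
    rw [e]
    intro hnil
    exact h (fun x hx => by rw [hnil] at hx; exact absurd hx List.not_mem_nil)

theorem onePlusIter_pos (m : ℕ) (a : (iterPack (basePack Y) (m+1)).T)
    (h : ∀ x ∈ a.1, x = zeroIter Y m) :
    (onePlusIter Y (m+1) a).1 = zeroIter Y m :: a.1 := by
  classical
  exact congrArg Subtype.val (dif_pos h)

theorem onePlusIter_neg (m : ℕ) (a : (iterPack (basePack Y) (m+1)).T)
    (h : ¬ ∀ x ∈ a.1, x = zeroIter Y m) :
    onePlusIter Y (m+1) a = a := by
  classical
  exact dif_neg h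

theorem levelFacts (Y : Type u) [LinearOrder Y] (m : ℕ) :
    PackIsLinear (iterPack (basePack Y) m) ∧
    (∀ x, (iterPack (basePack Y) m).le (zeroIter Y m) x) ∧
    (∀ x y, (iterPack (basePack Y) m).le x y →
      (iterPack (basePack Y) m).le (onePlusIter Y m x) (onePlusIter Y m y)) ∧
    (∀ x y, (iterPack (basePack Y) m).lt x y →
      (iterPack (basePack Y) m).lt (onePlusIter Y m x) (onePlusIter Y m y)) ∧
    (∀ x, (iterPack (basePack Y) m).lt (zeroIter Y m) (onePlusIter Y m x)) := by
  induction m with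
  | zero =>
    refine ⟨⟨fun a => le_refl (α := ℕ ⊕ₗ Y) a,
      fun a b c h1 h2 => le_trans (α := ℕ ⊕ₗ Y) h1 h2,
      fun a b h1 h2 => le_antisymm (α := ℕ ⊕ₗ Y) h1 h2,
      fun a b => le_total (α := ℕ ⊕ₗ Y) a b,
      fun a b => lt_iff_le_not_ge (α := ℕ ⊕ₗ Y)⟩, ?_, ?_, ?_, ?_⟩
    · rintro (n | y)
      · exact Sum.Lex.inl (Nat.zero_le n)
      · exact le_of_lt (Sum.Lex.sep _ _)
    · rintro (n | y) (n' | y') h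
      · cases h with
        | inl h => exact Sum.Lex.inl (by omega)
      · exact le_of_lt (Sum.Lex.sep _ _)
      · cases h
      · cases h with
        | inr h => exact Sum.Lex.inr h
    · rintro (n | y) (n' | y') h
      · cases h with
        | inl h => exact Sum.Lex.inl (by omega)
      · exact Sum.Lex.sep _ _
      · cases h
      · cases h with
        | inr h => exact Sum.Lex.inr h
    · rintro (n | y)
      · exact Sum.Lex.inl (Nat.succ_pos n)
      · exact Sum.Lex.sep _ _
  | succ m ih =>
    obtain ⟨hL, hz, hle1, hlt1, hzlt⟩ := ih
    have href := hL.1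
    have hletr := hL.2.1
    have hanti := hL.2.2.1
    have hiff := hL.2.2.2.2
    have hirr := pack_lt_irrefl hL
    have hltmono : ∀ a b : (iterPack (basePack Y) (m+1)).T,
        SeqLT (iterPack (basePack Y) m).lt a.1 b.1 →
        SeqLT (iterPack (basePack Y) m).lt (onePlusIter Y (m+1) a).1
          (onePlusIter Y (m+1) b).1 := by
      intro a b h
      by_cases ha : ∀ x ∈ a.1, x = zeroIter Y m
      · by_cases hb : ∀ x ∈ b.1, x = zeroIter Y m
        · -- both constant zero
          have hlen : a.1.length < b.1.length := by
            rcases h.elim' with ⟨j, hja, hjb, _, _, hlt⟩ | ⟨_, hlen, _⟩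
            · rw [ha _ (List.getElem_mem hja), hb _ (List.getElem_mem hjb)] at hlt
              exact absurd hlt (hirr _)
            · exact hlen
          rw [onePlusIter_pos m a ha, onePlusIter_pos m b hb]
          refine SeqLT.of_prefix (by simpa using hlen) ?_
          intro i hi
          match i with
          | 0 => rw [List.getElem?_cons_zero, List.getElem?_cons_zero]
          | i + 1 =>
            simp only [List.length_cons] at hi
            rw [List.getElem?_cons_succ, List.getElem?_cons_succ,
              List.getElem?_eq_getElem (show i < a.1.length by omega),
              List.getElem?_eq_getElem (show i < b.1.length by omega)]
            exact congrArg some ((ha _ (List.getElem_mem _)).trans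
              (hb _ (List.getElem_mem _)).symm)
        · -- a constant zero, b not
          rw [onePlusIter_pos m a ha, onePlusIter_neg m b hb]
          push_neg at hb
          obtain ⟨w, hw, hwne⟩ := hb
          obtain ⟨iw, hiw, rfl⟩ := List.mem_iff_getElem.mp hw
          have h0 : 0 < b.1.length := by omega
          have hle0 : (iterPack (basePack Y) m).le (b.1[iw]'hiw) (b.1[0]'h0) :=
            chain'_le_get href hletr b.2 0 iw (Nat.zero_le _) hiw
          have hb0ne : b.1[0]'h0 ≠ zeroIter Y m := by
            intro hc
            rw [hc] at hle0
            exact hwne (hanti _ _ hle0 (hz _))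
          have hlt0 : (iterPack (basePack Y) m).lt (zeroIter Y m) (b.1[0]'h0) := by
            rw [hiff]
            exact ⟨hz _, fun hc => hb0ne (hanti _ _ hc (hz _))⟩
          refine SeqLT.of_get (j := 0) (by simp) h0 (fun i hi => by omega) ?_ ?_
          · rw [List.getElem_cons_zero]
            exact Ne.symm hb0ne
          · rw [List.getElem_cons_zero]
            exact hlt0
      · by_cases hb : ∀ x ∈ b.1, x = zeroIter Y m
        · -- a not constant zero, b constant zero: impossible
          exfalso
          rcases h.elim' with ⟨j, hja, hjb, _, _, hlt⟩ | ⟨_, hlen, pre⟩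
          · rw [hb _ (List.getElem_mem hjb)] at hlt
            rw [hiff] at hlt
            exact hlt.2 (hz _)
          · apply ha
            intro x hx
            obtain ⟨i, hi, rfl⟩ := List.mem_iff_getElem.mp hx
            have := pre i hi
            rw [List.getElem?_eq_getElem hi,
              List.getElem?_eq_getElem (show i < b.1.length by omega)] at this
            rw [Option.some_injective _ this]
            exact hb _ (List.getElem_mem _)
        · rw [onePlusIter_neg m a ha, onePlusIter_neg m b hb]
          exact h
    refine ⟨stepLinear hL, ?_, ?_, hltmono, ?_⟩
    · intro x
      by_cases hx : x.1 = []
      · exact Or.inr (Subtype.ext hx.symm)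
      · exact Or.inl (SeqLT.of_prefix (α := []) (by simpa [List.length_pos_iff] using hx)
          (fun i hi => by simp at hi))
    · rintro a b (h | rfl)
      · exact Or.inl (hltmono _ _ h)
      · exact Or.inr rfl
    · intro a
      exact SeqLT.of_prefix (α := [])
        (by simpa [List.length_pos_iff] using onePlusIter_ne_nil m a)
        (fun i hi => by simp at hi)

end Levels

/-! ### The key lemma about `c(·,·)` -/

theorem keyLemma {T : Type u} {lt le : T → T → Prop} {zero : T} {onePlus : T → T}
    (href : ∀ a, le a a) (htr : ∀ a b c, le a b → le b c → le a c)
    (H1 : ∀ x, lt zero (onePlus x))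
    (H2 : ∀ x y, le x y → le (onePlus x) (onePlus y))
    (H3 : ∀ x y, lt x y → lt (onePlus x) (onePlus y))
    (H4 : ∀ x y z, le x y → lt y z → lt x z)
    {α β γ : List T} (hβ : List.Chain' (fun a b => le b a) β)
    (hba : SeqLT lt β α) (hj : jIdx α β ≤ jIdx β γ) :
    lt (cW zero onePlus β γ) (cW zero onePlus α β) := by
  rcases hba.elim' with ⟨j, hjβ, hjα, hjeq, pre, hlt⟩ | ⟨hjeq, hlen, pre⟩
  · -- first kind: `β` and `α` differ at `j`, with `β_j < α_j`
    have hjab : jIdx α β = j := (jIdx_comm α β).trans hjeq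
    have hc1 : cW zero onePlus α β = onePlus (α[j]'hjα) := by
      unfold cW extW
      rw [hjab, dif_pos hjα]
    rw [hc1]
    rw [hjab] at hj
    unfold cW extW
    by_cases hj' : jIdx β γ < β.length
    · rw [dif_pos hj']
      have hle : le (β[jIdx β γ]'hj') (β[j]'hjβ) :=
        chain'_le_get href htr hβ j (jIdx β γ) hj hj'
      exact H4 _ _ _ (H2 _ _ hle) (H3 _ _ hlt)
    · rw [dif_neg hj']
      exact H1 _
  · -- second kind: `β` is a proper prefix of `α`
    have hjab : jIdx α β = β.length := (jIdx_comm α β).trans hjeq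
    have hc1 : cW zero onePlus α β = onePlus (α[β.length]'hlen) := by
      unfold cW extW
      rw [hjab, dif_pos hlen]
    rw [hc1]
    rw [hjab] at hj
    unfold cW extW
    rw [dif_neg (by omega)]
    exact H1 _

/-! ### The main induction -/

theorem lt_castT {Y : Type u} [LinearOrder Y] {a b : ℕ} (h : a = b)
    (x y : (iterPack (basePack Y) a).T) :
    (iterPack (basePack Y) b).lt (castT h x) (castT h y) ↔
      (iterPack (basePack Y) a).lt x y := by
  subst h
  exact Iff.rfl

theorem fk_succ_eq {Y : Type u} [LinearOrder Y] (n : ℕ) (f : ℕ → (iterPack (basePack Y) n).T)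
    (k : ℕ) (hkn : k < n) (u : Fin (k + 2) → ℕ) :
    fk n f (k + 1) u =
      (Fin.snoc (fk n f k (u ∘ Fin.castSucc)).1
        (jIdx (castT (show n - k = (n - (k + 1)) + 1 by omega) (fk n f k (u ∘ Fin.castSucc)).2).1
              (castT (show n - k = (n - (k + 1)) + 1 by omega) (fk n f k (u ∘ Fin.succ)).2).1),
       cIter Y (n - (k + 1))
        (castT (show n - k = (n - (k + 1)) + 1 by omega) (fk n f k (u ∘ Fin.castSucc)).2).1
        (castT (show n - k = (n - (k + 1)) + 1 by omega) (fk n f k (u ∘ Fin.succ)).2).1) := by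
  simp only [fk]
  rw [dif_pos hkn]

theorem f_decr {Y : Type u} [LinearOrder Y] (n : ℕ) (f : ℕ → (iterPack (basePack Y) n).T)
    (hf : ∀ i : ℕ, (iterPack (basePack Y) n).lt (f (i + 1)) (f i)) :
    ∀ i j, i < j → (iterPack (basePack Y) n).lt (f j) (f i) := by
  have htr := pack_lt_trans (levelFacts Y n).1
  intro i j hij
  induction j with
  | zero => omega
  | succ j ih =>
    rcases Nat.lt_or_ge i j with h | h
    · exact htr _ _ _ (hf j) (ih h)
    · have hij' : i = j := by omega
      subst hij'
      exact hf i

theorem mainClaim {Y : Type u} [LinearOrder Y] (n : ℕ) (f : ℕ → (iterPack (basePack Y) n).T)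
    (hf : ∀ i : ℕ, (iterPack (basePack Y) n).lt (f (i + 1)) (f i)) :
    ∀ k, k ≤ n → ∀ s t : Fin (k + 1) → ℕ, StrictMono s → StrictMono t → Tril s t →
      (∀ i, (fk n f k s).1 i ≤ (fk n f k t).1 i) →
      (iterPack (basePack Y) (n - k)).lt (fk n f k t).2 (fk n f k s).2 := by
  intro k
  induction k with
  | zero =>
    intro _ s t _ _ hst _
    simp only [fk]
    exact f_decr n f hf (s 0) (t 0) hst.1
  | succ k ih =>
    intro hk s t hs ht hst hcomp
    have hkn : k < n := by omega
    have hts : t ∘ Fin.castSucc = s ∘ Fin.succ := funext fun i => (hst.2 i).symm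
    rw [fk_succ_eq n f k hkn s, fk_succ_eq n f k hkn t, hts] at hcomp
    rw [fk_succ_eq n f k hkn s, fk_succ_eq n f k hkn t, hts]
    have hlast := hcomp (Fin.last k)
    simp only [Fin.snoc_last] at hlast
    have hpre : ∀ i, (fk n f k (s ∘ Fin.castSucc)).1 i ≤ (fk n f k (s ∘ Fin.succ)).1 i := by
      intro i
      have := hcomp i.castSucc
      simpa [Fin.snoc_castSucc] using this
    have htril' : Tril (s ∘ Fin.castSucc) (s ∘ Fin.succ) := by
      refine ⟨hs Fin.castSucc_lt_succ, fun i => ?_⟩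
      exact congrArg s ((Fin.succ_castSucc i).symm)
    have hlt := ih (by omega) (s ∘ Fin.castSucc) (s ∘ Fin.succ)
      (hs.comp Fin.strictMono_castSucc) (hs.comp Fin.strictMono_succ) htril' hpre
    have hlt2 : SeqLT (iterPack (basePack Y) (n - (k + 1))).lt
        (castT (show n - k = (n - (k + 1)) + 1 by omega) (fk n f k (s ∘ Fin.succ)).2).1
        (castT (show n - k = (n - (k + 1)) + 1 by omega) (fk n f k (s ∘ Fin.castSucc)).2).1 :=
      (lt_castT (show n - k = (n - (k + 1)) + 1 by omega) _ _).mpr hlt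
    obtain ⟨hL, hz, hp2, hp3, hp1⟩ := levelFacts Y (n - (k + 1))
    exact keyLemma hL.1 hL.2.1 hp1 hp2 hp3 (fun x y z => pack_le_lt_trans hL x y z)
      (castT (show n - k = (n - (k + 1)) + 1 by omega) (fk n f k (s ∘ Fin.succ)).2).2
      hlt2 hlast

/-- Let `X = ω + Y`. If `f : ℕ → ω^X_n` is strictly decreasing, then
`f_n : [ℕ]^{n+1} → ℕ^n × X` is bad: there are no `s ⊲ t` in `[ℕ]^{n+1}` with
`f_n s ≤ f_n t` componentwise. -/
theorem fn_bad_of_strict_decr {Y : Type u} [LinearOrder Y] (n : ℕ)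
    (f : ℕ → (iterPack (basePack Y) n).T)
    (hf : ∀ i : ℕ, (iterPack (basePack Y) n).lt (f (i + 1)) (f i)) :
    ¬ GoodSub (prodLE (iterPack (basePack Y) (n - n)).le)
      (fun s => fk n f n s.1) := by
  rintro ⟨s, t, htril, hle⟩
  have hlt := mainClaim n f hf n le_rfl s.1 t.1 s.2 t.2 htril hle.1
  have hL := (levelFacts Y (n - n)).1
  exact ((hL.2.2.2.2 _ _).mp hlt).2 hle.2
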